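/- arXiv:2412.13949 — 4 statements merged into one kernel-verified Lean document; each statement's English description precedes it below -/
import Mathlib

section
/- Let E be a real inner product space and let x, y ∈ E be linearly independent vectors. For any real number α > 1, the cosine similarity between x + (α−1)·y and y is strictly greater than the cosine similarity between x and y; that is, ⟪x + (α−1)y, y⟫ / (‖x + (α−1)y‖·‖y‖) > ⟪x, y⟫ / (‖x‖·‖y‖). -/
open RealInnerProductSpace

private lemma key_ineq (a b c n t : ℝ) (ha : 0 < a) (hb : 0 < b) (hn : 0 < n) (ht : 0 < t)
    (hcs1 : c < a * b) (hcs2 : -c < a * b)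
    (hn2 : n ^ 2 = a ^ 2 + 2 * (t * c) + t ^ 2 * b ^ 2)
    (hrev : a - t * b ≤ n) : c * n < (c + t * b ^ 2) * a := by
  rcases le_or_gt c 0 with hcle | hcpos
  · have h1 : c * n ≤ c * (a - t * b) := by nlinarith
    nlinarith [mul_pos (mul_pos ht hb) (show 0 < a * b + c by linarith)]
  · have hpos1 : 0 < c * n := mul_pos hcpos hn
    have hpos2 : 0 < (c + t * b ^ 2) * a := by positivity
    have h3 : c ^ 2 < (a * b) ^ 2 := by nlinarith
    have hsq : (c * n) ^ 2 < ((c + t * b ^ 2) * a) ^ 2 := by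
      nlinarith [mul_pos (mul_pos ht hcpos) (sub_pos.2 h3),
        mul_pos (mul_pos (mul_pos ht ht) (mul_pos hb hb)) (sub_pos.2 h3)]
    exact lt_of_pow_lt_pow_left₀ 2 hpos2.le hsq

/-- Proposition 1 (vector form): amplifying `y` by a factor `α > 1` before adding it to `x`
strictly increases the cosine similarity with `y`. -/
theorem cos_sim_add_smul_gt {E : Type*} [NormedAddCommGroup E] [InnerProductSpace ℝ E]
    (x y : E) (hxy : LinearIndependent ℝ ![x, y]) (α : ℝ) (hα : 1 < α) :
    ⟪x + (α - 1) • y, y⟫ / (‖x + (α - 1) • y‖ * ‖y‖) > ⟪x, y⟫ / (‖x‖ * ‖y‖) := by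
  set t := α - 1 with htdef
  have ht : 0 < t := by simp only [htdef]; linarith
  have hpair := LinearIndependent.pair_iff.1 hxy
  have hx0 : x ≠ 0 := by
    intro h; have := (hpair 1 0 (by simp [h])).1; norm_num at this
  have hy0 : y ≠ 0 := by
    intro h; have := (hpair 0 1 (by simp [h])).2; norm_num at this
  have hz0 : x + t • y ≠ 0 := by
    intro h
    have := (hpair 1 t (by simpa [one_smul] using h)).1
    norm_num at this
  have ha : 0 < ‖x‖ := norm_pos_iff.2 hx0
  have hb : 0 < ‖y‖ := norm_pos_iff.2 hy0
  have hn : 0 < ‖x + t • y‖ := norm_pos_iff.2 hz0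
  have hcs1 : ⟪x, y⟫ < ‖x‖ * ‖y‖ := by
    rw [inner_lt_norm_mul_iff_real]
    intro h
    have := (hpair ‖y‖ (-‖x‖) (by rw [neg_smul, h]; abel)).1
    exact hb.ne' this
  have hcs2 : -⟪x, y⟫ < ‖x‖ * ‖y‖ := by
    have h2 : ⟪x, -y⟫ < ‖x‖ * ‖-y‖ := by
      rw [inner_lt_norm_mul_iff_real]
      intro h
      simp only [norm_neg, smul_neg] at h
      have := (hpair ‖y‖ ‖x‖ (by rw [h]; abel)).1
      exact hb.ne' this
    simpa [inner_neg_right] using h2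
  have hinner : ⟪x + t • y, y⟫ = ⟪x, y⟫ + t * ‖y‖ ^ 2 := by
    rw [inner_add_left, real_inner_smul_left, real_inner_self_eq_norm_sq]
  have hn2 : ‖x + t • y‖ ^ 2 = ‖x‖ ^ 2 + 2 * (t * ⟪x, y⟫) + t ^ 2 * ‖y‖ ^ 2 := by
    rw [norm_add_sq_real, real_inner_smul_right, norm_smul, Real.norm_eq_abs,
      abs_of_pos ht]
    ring
  have hrev : ‖x‖ - t * ‖y‖ ≤ ‖x + t • y‖ := by
    have h4 := norm_add_le (x + t • y) (-(t • y))
    simp only [add_neg_cancel_right, norm_neg, norm_smul, Real.norm_eq_abs,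
      abs_of_pos ht] at h4
    linarith
  have key := key_ineq ‖x‖ ‖y‖ ⟪x, y⟫ ‖x + t • y‖ t ha hb hn ht hcs1 hcs2 hn2 hrev
  rw [hinner, gt_iff_lt, div_lt_div_iff₀ (by positivity) (by positivity)]
  nlinarith [mul_lt_mul_of_pos_right key hb]
end

section
/- Let E be a real inner product space, let x, y ∈ E be linearly independent, let α > 1 and g > 0 be real numbers. Define the normalized vectors Z̃ = g·(x + (α−1)y)/‖x + (α−1)y‖, Z = g·x/‖x‖, and Z_h = g·y/‖y‖ (RMS-normalization with gain g). Then cos(Z̃, Z_h) > cos(Z, Z_h), where cos(u, v) = ⟪u, v⟫/(‖u‖·‖v‖). -/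
open RealInnerProductSpace

/-- Proposition 1 as stated in the paper, with RMS-normalized vectors
`Z̃ = g•(x + (α−1)y)/‖x + (α−1)y‖`, `Z = g•x/‖x‖`, `Z_h = g•y/‖y‖`. -/
theorem cos_sim_rmsnorm_gt {E : Type*} [NormedAddCommGroup E] [InnerProductSpace ℝ E]
    (x y : E) (hxy : LinearIndependent ℝ ![x, y]) (α g : ℝ) (hα : 1 < α) (hg : 0 < g)
    (Zt Z Zh : E)
    (hZt : Zt = g • (‖x + (α - 1) • y‖)⁻¹ • (x + (α - 1) • y))
    (hZ : Z = g • (‖x‖)⁻¹ • x)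
    (hZh : Zh = g • (‖y‖)⁻¹ • y) :
    ⟪Zt, Zh⟫ / (‖Zt‖ * ‖Zh‖) > ⟪Z, Zh⟫ / (‖Z‖ * ‖Zh‖) := by
  rw [linearIndependent_fin2] at hxy
  obtain ⟨hy0, hax⟩ := hxy
  simp only [Matrix.cons_val_one, Matrix.head_cons, Matrix.cons_val_zero] at hy0 hax
  set β : ℝ := α - 1 with hβdef
  have hβ : 0 < β := by simp only [hβdef]; linarith
  have hx0 : x ≠ 0 := fun h => hax 0 (by simp [h])
  have hw0 : x + β • y ≠ 0 := by
    intro h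
    apply hax (-β)
    rw [add_eq_zero_iff_eq_neg] at h
    rw [neg_smul, ← h]
  have ha : (0:ℝ) < ‖x‖ := norm_pos_iff.mpr hx0
  have hb : (0:ℝ) < ‖y‖ := norm_pos_iff.mpr hy0
  have hq : (0:ℝ) < ‖x + β • y‖ := norm_pos_iff.mpr hw0
  -- strict Cauchy–Schwarz both ways
  have hcs1 : ⟪x, y⟫ < ‖x‖ * ‖y‖ := by
    rw [inner_lt_norm_mul_iff_real]
    intro h
    apply hax (‖x‖ / ‖y‖)
    rw [div_eq_mul_inv, mul_comm, mul_smul, ← h, inv_smul_smul₀ hb.ne']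
  have hcs2 : -⟪x, y⟫ < ‖x‖ * ‖y‖ := by
    have h2 := inner_lt_norm_mul_iff_real (F := E) (x := x) (y := -y)
    rw [inner_neg_right, norm_neg] at h2
    rw [h2]
    intro h
    apply hax (-(‖x‖ / ‖y‖))
    have h3 : (-(‖x‖ / ‖y‖)) • y = (‖y‖)⁻¹ • (‖x‖ • -y) := by
      module
    rw [h3, ← h, inv_smul_smul₀ hb.ne']
  -- core inequality
  have key : ⟪x, y⟫ / (‖x‖ * ‖y‖) < ⟪x + β • y, y⟫ / (‖x + β • y‖ * ‖y‖) := by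
    have hip : ⟪x + β • y, y⟫ = ⟪x, y⟫ + β * (‖y‖ * ‖y‖) := by
      rw [inner_add_left, real_inner_smul_left, real_inner_self_eq_norm_mul_norm]
    rw [div_lt_div_iff₀ (by positivity) (by positivity), hip]
    have htri1 : ‖x + β • y‖ ≤ ‖x‖ + β * ‖y‖ := by
      calc ‖x + β • y‖ ≤ ‖x‖ + ‖β • y‖ := norm_add_le _ _
        _ = ‖x‖ + β * ‖y‖ := by rw [norm_smul, Real.norm_eq_abs, abs_of_pos hβ]
    have htri2 : ‖x‖ - β * ‖y‖ ≤ ‖x + β • y‖ := by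
      have h := norm_sub_norm_le x (-(β • y))
      rw [sub_neg_eq_add, norm_neg, norm_smul, Real.norm_eq_abs, abs_of_pos hβ] at h
      exact h
    rcases le_or_gt 0 ⟪x, y⟫ with hc | hc
    · have hA := mul_le_mul_of_nonneg_right (mul_le_mul_of_nonneg_left htri1 hc) hb.le
      nlinarith [hA, mul_lt_mul_of_pos_left hcs1 (mul_pos (mul_pos hβ hb) hb)]
    · have hA := mul_le_mul_of_nonneg_right (mul_le_mul_of_nonpos_left htri2 hc.le) hb.le
      nlinarith [hA, mul_lt_mul_of_pos_left hcs2 (mul_pos (mul_pos hβ hb) hb)]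
  -- reduce the goal to the core inequality
  have norm_eq : ∀ (w : E), w ≠ 0 →
      ⟪g • (‖w‖)⁻¹ • w, g • (‖y‖)⁻¹ • y⟫ / (‖g • (‖w‖)⁻¹ • w‖ * ‖g • (‖y‖)⁻¹ • y‖)
        = ⟪w, y⟫ / (‖w‖ * ‖y‖) := by
    intro w hw
    have hqw : (0:ℝ) < ‖w‖ := norm_pos_iff.mpr hw
    rw [real_inner_smul_left, real_inner_smul_left, real_inner_smul_right,
      real_inner_smul_right, norm_smul, norm_smul, norm_smul, norm_smul,
      Real.norm_eq_abs, abs_of_pos hg, norm_inv, norm_norm, norm_inv, norm_norm]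
    rw [inv_mul_cancel₀ hqw.ne', inv_mul_cancel₀ hb.ne']
    field_simp
  rw [hZt, hZ, hZh, norm_eq (x + β • y) hw0, norm_eq x hx0]
  exact key
end

section
/- Let E be a real inner product space, let x, y ∈ E be nonzero vectors, and let β ≥ 0 be a real number such that x + β·y ≠ 0. Then ⟪x + βy, y⟫ / (‖x + βy‖·‖y‖) ≥ ⟪x, y⟫ / (‖x‖·‖y‖); that is, adding a nonnegative multiple of y to x cannot decrease the cosine similarity with y. -/
open RealInnerProductSpace

/-- Non-strict version of Proposition 1: adding a nonnegative multiple of `y` to `x`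
cannot decrease the cosine similarity with `y`. -/
theorem cos_sim_add_smul_ge {E : Type*} [NormedAddCommGroup E] [InnerProductSpace ℝ E]
    (x y : E) (hx : x ≠ 0) (hy : y ≠ 0) (β : ℝ) (hβ : 0 ≤ β) (hxy : x + β • y ≠ 0) :
    ⟪x + β • y, y⟫ / (‖x + β • y‖ * ‖y‖) ≥ ⟪x, y⟫ / (‖x‖ * ‖y‖) := by
  set c : ℝ := ⟪x, y⟫ with hc
  set n := ‖x‖ with hn
  set m := ‖y‖ with hm
  set a := ‖x + β • y‖ with ha
  have hn0 : 0 < n := norm_pos_iff.2 hx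
  have hm0 : 0 < m := norm_pos_iff.2 hy
  have ha0 : 0 < a := norm_pos_iff.2 hxy
  have hinner : ⟪x + β • y, y⟫ = c + β * m ^ 2 := by
    rw [inner_add_left, real_inner_smul_left, hc, hm,
      real_inner_self_eq_norm_sq]
  have hc1 : c ≤ n * m := real_inner_le_norm x y
  have hc2 : -(n * m) ≤ c := neg_le_of_abs_le (abs_real_inner_le_norm x y)
  have ha1 : a ≤ n + β * m := by
    calc a ≤ ‖x‖ + ‖β • y‖ := norm_add_le _ _
    _ = n + β * m := by rw [norm_smul, Real.norm_eq_abs, abs_of_nonneg hβ]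
  have ha2 : n ≤ a + β * m := by
    have : ‖x‖ ≤ ‖x + β • y‖ + ‖β • y‖ := by
      calc ‖x‖ = ‖(x + β • y) - β • y‖ := by rw [add_sub_cancel_right]
      _ ≤ _ := norm_sub_le _ _
    simpa [norm_smul, Real.norm_eq_abs, abs_of_nonneg hβ] using this
  rw [hinner, ge_iff_le, div_le_div_iff₀ (by positivity) (by positivity)]
  rcases le_or_gt 0 c with h | h
  · nlinarith [mul_nonneg (mul_nonneg h (by linarith : (0:ℝ) ≤ n + β * m - a)) hm0.le,
      mul_nonneg (mul_nonneg (mul_nonneg hβ (mul_pos hm0 hm0).le)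
        (sub_nonneg.2 hc1)) hm0.le]
  · nlinarith [mul_nonneg (mul_nonneg (by linarith : (0:ℝ) ≤ -c)
        (by linarith : (0:ℝ) ≤ a + β * m - n)) hm0.le,
      mul_nonneg (mul_nonneg (mul_nonneg hβ (mul_pos hm0 hm0).le)
        (by linarith : (0:ℝ) ≤ n * m + c)) hm0.le]
end

section
/- Let E be a real inner product space, let x, y ∈ E be linearly independent, and let α > 1 be a real number. Then the angle between x + (α−1)·y and y is strictly smaller than the angle between x and y, where the angle between nonzero vectors u, v is arccos(⟪u, v⟫ / (‖u‖·‖v‖)). -/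
open RealInnerProductSpace

theorem core_ineq (a b c t nu : ℝ) (ht : 0 < t) (hb : 0 < b) (hc : 0 < c) (hnu : 0 < nu)
    (hnu2 : nu^2 = c^2 + 2*t*a + t^2*b^2) (hcs : a^2 < c^2*b^2) :
    a*nu < (a + t*b^2)*c := by
  rcases le_or_gt (a + t*b^2) 0 with h | h
  · have ha : a < 0 := by nlinarith
    have hsq : ((a + t*b^2)*c)^2 < (a*nu)^2 := by
      nlinarith [mul_pos (mul_pos ht (by linarith : 0 < -(2*a+t*b^2))) (by linarith : 0 < c^2*b^2 - a^2)]
    have : -((a + t*b^2)*c) < -(a*nu) := by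
      refine lt_of_pow_lt_pow_left₀ 2 (by nlinarith : (0:ℝ) ≤ -(a*nu)) ?_
      simpa using hsq
    linarith
  · rcases le_or_gt a 0 with h2 | h2
    · nlinarith [mul_pos h hc, mul_nonpos_of_nonpos_of_nonneg h2 hnu.le]
    · have hsq : (a*nu)^2 < ((a + t*b^2)*c)^2 := by
        nlinarith [mul_pos (mul_pos ht (by linarith : 0 < 2*a+t*b^2)) (by linarith : 0 < c^2*b^2 - a^2)]
      exact lt_of_pow_lt_pow_left₀ 2 (by positivity) hsq

/-- Angle reformulation of Proposition 1: amplifying `y` by `α > 1` before adding it to `x`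
strictly decreases the angle with `y`, where the angle between nonzero vectors `u, v` is
`arccos (⟪u, v⟫ / (‖u‖ * ‖v‖))`. -/
theorem angle_add_smul_lt {E : Type*} [NormedAddCommGroup E] [InnerProductSpace ℝ E]
    (x y : E) (hxy : LinearIndependent ℝ ![x, y]) (α : ℝ) (hα : 1 < α) :
    Real.arccos (⟪x + (α - 1) • y, y⟫ / (‖x + (α - 1) • y‖ * ‖y‖)) <
      Real.arccos (⟪x, y⟫ / (‖x‖ * ‖y‖)) := by
  have hpair := LinearIndependent.pair_iff.mp hxy
  set t : ℝ := α - 1 with htdef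
  have ht : 0 < t := by simp [htdef]; linarith
  have hx : x ≠ 0 := by
    intro h; rcases (hpair 1 0 (by simp [h])) with ⟨h1, _⟩; exact one_ne_zero h1
  have hy : y ≠ 0 := by
    intro h; rcases (hpair 0 1 (by simp [h])) with ⟨_, h1⟩; exact one_ne_zero h1
  have hu : x + t • y ≠ 0 := by
    intro h
    rcases hpair 1 t (by simpa using h) with ⟨h1, _⟩
    exact one_ne_zero h1
  have hcn : 0 < ‖x‖ := norm_pos_iff.mpr hx
  have hbn : 0 < ‖y‖ := norm_pos_iff.mpr hy
  have hnun : 0 < ‖x + t • y‖ := norm_pos_iff.mpr hu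
  -- strict Cauchy-Schwarz
  have hcs : ⟪x, y⟫ ^ 2 < ‖x‖ ^ 2 * ‖y‖ ^ 2 := by
    have h1 : ⟪x, y⟫ < ‖x‖ * ‖y‖ := by
      rw [inner_lt_norm_mul_iff_real]
      intro h
      rcases hpair ‖y‖ (-‖x‖) (by rw [neg_smul, h]; abel) with ⟨h1, _⟩
      exact hbn.ne' h1
    have h2 : -(‖x‖ * ‖y‖) < ⟪x, y⟫ := by
      have h3 : ⟪-x, y⟫ < ‖-x‖ * ‖y‖ := by
        rw [inner_lt_norm_mul_iff_real]
        intro h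
        rcases hpair ‖y‖ ‖-x‖ (by rw [← h, smul_neg]; abel) with ⟨h1, _⟩
        exact hbn.ne' h1
      rw [inner_neg_left, norm_neg] at h3
      linarith
    have habs : |⟪x, y⟫| < ‖x‖ * ‖y‖ := abs_lt.mpr ⟨h2, h1⟩
    calc ⟪x, y⟫ ^ 2 = |⟪x, y⟫| ^ 2 := (sq_abs _).symm
      _ < (‖x‖ * ‖y‖) ^ 2 := by
          exact pow_lt_pow_left₀ habs (abs_nonneg _) (by norm_num)
      _ = ‖x‖ ^ 2 * ‖y‖ ^ 2 := by ring
  have hinner : ⟪x + t • y, y⟫ = ⟪x, y⟫ + t * ‖y‖ ^ 2 := by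
    rw [inner_add_left, real_inner_smul_left, real_inner_self_eq_norm_sq]
  have hnorm : ‖x + t • y‖ ^ 2 = ‖x‖ ^ 2 + 2 * t * ⟪x, y⟫ + t ^ 2 * ‖y‖ ^ 2 := by
    rw [@norm_add_sq_real, real_inner_smul_right, norm_smul]
    simp [abs_of_pos ht, mul_pow]
    ring
  have key : ⟪x, y⟫ * ‖x + t • y‖ < (⟪x, y⟫ + t * ‖y‖ ^ 2) * ‖x‖ :=
    core_ineq ⟪x, y⟫ ‖y‖ ‖x‖ t ‖x + t • y‖ ht hbn hcn hnun hnorm hcs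
  have hmem : ∀ u v : E, ⟪u, v⟫ / (‖u‖ * ‖v‖) ∈ Set.Icc (-1 : ℝ) 1 := by
    intro u v
    have := abs_real_inner_div_norm_mul_norm_le_one u v
    rw [abs_le] at this
    exact ⟨this.1, this.2⟩
  apply Real.strictAntiOn_arccos (hmem x y) (hmem _ y)
  rw [hinner, div_lt_div_iff₀ (mul_pos hcn hbn) (mul_pos hnun hbn)]
  calc ⟪x, y⟫ * (‖x + t • y‖ * ‖y‖) = (⟪x, y⟫ * ‖x + t • y‖) * ‖y‖ := by ring
    _ < ((⟪x, y⟫ + t * ‖y‖ ^ 2) * ‖x‖) * ‖y‖ := mul_lt_mul_of_pos_right key hbn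
    _ = (⟪x, y⟫ + t * ‖y‖ ^ 2) * (‖x‖ * ‖y‖) := by ring
end
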